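/- arXiv:math/0301252 — 2 statements merged into one kernel-verified Lean document; each statement's English description precedes it below -/
import Mathlib

section
/- For every prime p ≥ 7, the multiple harmonic sums H(1,2,1; p−1), H(1,1,2; p−1) and H(2,1,1; p−1) are all congruent to 0 modulo p. -/
/-- Multiple harmonic sum helper: exponent list, exclusive lower bound, upper bound. -/
def Haux : List ℕ → ℕ → ℕ → ℚ
  | [], _, _ => 1
  | a :: t, m, n => ∑ k ∈ Finset.Ioc m n, (1 / (k : ℚ) ^ a) * Haux t k n

/-- Multiple harmonic sum `H(s₁,…,s_l; n) = ∑_{1 ≤ k₁ < ⋯ < k_l ≤ n} k₁^{-s₁}⋯k_l^{-s_l}`. -/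
def H (s : List ℕ) (n : ℕ) : ℚ := Haux s 0 n


set_option linter.unusedSectionVars false
set_option linter.unusedVariables false

open Finset

namespace MHSproof

variable {p : ℕ} [Fact p.Prime]

noncomputable def hh (p n : ℕ) : ZMod p := ∑ i ∈ Finset.Ioc 0 n, (i : ZMod p)⁻¹
noncomputable def hh2 (p n : ℕ) : ZMod p := ∑ i ∈ Finset.Ioc 0 n, ((i : ZMod p)⁻¹) ^ 2
noncomputable def VV (p m : ℕ) : ZMod p :=
  ∑ i ∈ Finset.Ioo 0 m, ((i : ZMod p) * ((m - i : ℕ) : ZMod p))⁻¹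

lemma ppos : 0 < p := (Fact.out : p.Prime).pos

lemma cast_ne {k : ℕ} (h0 : 0 < k) (hk : k < p) : (k : ZMod p) ≠ 0 := by
  intro h
  rw [ZMod.natCast_eq_zero_iff] at h
  exact absurd (Nat.le_of_dvd h0 h) (by omega)

lemma cast_sub' {k : ℕ} (hk : k ≤ p) : ((p - k : ℕ) : ZMod p) = -(k : ZMod p) := by
  push_cast [Nat.cast_sub hk]
  simp

lemma hh_zero : hh p 0 = 0 := by simp [hh]

lemma hh_succ (n : ℕ) : hh p (n + 1) = hh p n + ((n + 1 : ℕ) : ZMod p)⁻¹ := by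
  rw [hh, hh, Finset.sum_Ioc_succ_top (Nat.zero_le n)]

lemma hh2_zero : hh2 p 0 = 0 := by simp [hh2]

lemma hh2_succ (n : ℕ) : hh2 p (n + 1) = hh2 p n + (((n + 1 : ℕ) : ZMod p)⁻¹) ^ 2 := by
  rw [hh2, hh2, Finset.sum_Ioc_succ_top (Nat.zero_le n)]

lemma hh_pred {k : ℕ} (h0 : 0 < k) : hh p (k - 1) = hh p k - (k : ZMod p)⁻¹ := by
  obtain ⟨m, rfl⟩ := Nat.exists_eq_add_of_le h0
  simp [hh_succ, Nat.add_comm]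

lemma hh2_pred {k : ℕ} (h0 : 0 < k) : hh2 p (k - 1) = hh2 p k - ((k : ZMod p)⁻¹) ^ 2 := by
  obtain ⟨m, rfl⟩ := Nat.exists_eq_add_of_le h0
  simp [hh2_succ, Nat.add_comm]

lemma sum_pow_inv (a : ℕ) (ha0 : 0 < a) (hap : a < p - 1) :
    ∑ k ∈ Finset.Ioc 0 (p - 1), ((k : ZMod p)⁻¹) ^ a = 0 := by
  have h1 : ∑ k ∈ Finset.Ioc 0 (p - 1), ((k : ZMod p)⁻¹) ^ a
      = ∑ x ∈ Finset.univ.erase (0 : ZMod p), (x⁻¹) ^ a := by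
    refine Finset.sum_nbij' (fun k => (k : ZMod p)) (fun x => x.val) ?_ ?_ ?_ ?_ ?_
    · intro k hk
      simp only [Finset.mem_Ioc] at hk
      exact Finset.mem_erase.2 ⟨cast_ne hk.1 (by have := ppos (p := p); omega), Finset.mem_univ _⟩
    · intro x hx
      simp only [Finset.mem_erase] at hx
      have hlt := ZMod.val_lt x
      have : x.val ≠ 0 := fun h => hx.1 (by rwa [← ZMod.val_eq_zero])
      simp only [Finset.mem_Ioc]
      omega
    · intro k hk
      simp only [Finset.mem_Ioc] at hk
      exact ZMod.val_cast_of_lt (by have := ppos (p := p); omega)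
    · intro x hx
      exact ZMod.natCast_zmod_val x
    · intro k hk; rfl
  rw [h1]
  have h2 : ∑ x ∈ Finset.univ.erase (0 : ZMod p), (x⁻¹) ^ a
      = ∑ x ∈ Finset.univ.erase (0 : ZMod p), x ^ a := by
    refine Finset.sum_nbij' (fun x => x⁻¹) (fun x => x⁻¹) ?_ ?_ ?_ ?_ ?_ <;>
      intro x hx <;> simp only [Finset.mem_erase, Finset.mem_univ, and_true] at hx ⊢ <;>
      simp [inv_inv, inv_ne_zero, hx]
  rw [h2]
  have h3 := FiniteField.sum_pow_lt_card_sub_one (K := ZMod p) a (by rwa [ZMod.card])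
  rwa [← Finset.add_sum_erase _ _ (Finset.mem_univ (0 : ZMod p)),
    zero_pow ha0.ne', zero_add] at h3



lemma P1 (h7 : 7 ≤ p) : hh p (p - 1) = 0 := by
  have := sum_pow_inv (p := p) 1 one_pos (by omega)
  simpa [hh] using this

lemma P2 (h7 : 7 ≤ p) : hh2 p (p - 1) = 0 := by
  have := sum_pow_inv (p := p) 2 two_pos (by omega)
  simpa [hh2] using this

lemma P4 (h7 : 7 ≤ p) : ∑ k ∈ Finset.Ioc 0 (p - 1), ((k : ZMod p)⁻¹) ^ 4 = 0 :=
  sum_pow_inv 4 (by norm_num) (by omega)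

lemma two_ne (h7 : 7 ≤ p) : (2 : ZMod p) ≠ 0 := by
  have := cast_ne (p := p) (k := 2) two_pos (by omega)
  simpa using this

lemma hh_refl (h7 : 7 ≤ p) : ∀ l, l ≤ p - 1 → hh p (p - 1 - l) = hh p l := by
  intro l
  induction l with
  | zero => intro _; simpa [hh_zero] using P1 (p := p) h7
  | succ l ih =>
    intro hl
    have ihl := ih (by omega)
    have he : p - 1 - l = (p - 1 - (l + 1)) + 1 := by omega
    have hc : ((p - 1 - l : ℕ) : ZMod p)⁻¹ = -((l + 1 : ℕ) : ZMod p)⁻¹ := by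
      have h' : p - 1 - l = p - (l + 1) := by omega
      rw [h', cast_sub' (by omega), inv_neg]
    rw [he, hh_succ, ← he, hc] at ihl
    rw [hh_succ]
    linear_combination ihl

lemma hh2_refl (h7 : 7 ≤ p) : ∀ l, l ≤ p - 1 → hh2 p (p - 1 - l) = -hh2 p l := by
  intro l
  induction l with
  | zero => intro _; simpa [hh2_zero] using P2 (p := p) h7
  | succ l ih =>
    intro hl
    have ihl := ih (by omega)
    have he : p - 1 - l = (p - 1 - (l + 1)) + 1 := by omega
    have hc : ((p - 1 - l : ℕ) : ZMod p)⁻¹ = -((l + 1 : ℕ) : ZMod p)⁻¹ := by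
      have h' : p - 1 - l = p - (l + 1) := by omega
      rw [h', cast_sub' (by omega), inv_neg]
    rw [he, hh2_succ, ← he, hc] at ihl
    rw [hh2_succ]
    linear_combination ihl

/-- reflection reindex over `Ioc 0 (p-1)` -/
lemma refl_sum (f : ℕ → ZMod p) :
    ∑ k ∈ Finset.Ioc 0 (p - 1), f k = ∑ k ∈ Finset.Ioc 0 (p - 1), f (p - k) := by
  have hp0 := ppos (p := p)
  refine Finset.sum_nbij' (fun k => p - k) (fun k => p - k) ?_ ?_ ?_ ?_ ?_ <;>
      intro k hk <;> simp only [Finset.mem_Ioc] at hk ⊢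
  · omega
  · omega
  · omega
  · omega
  · congr 1; omega

lemma hh_top_sub {k : ℕ} (h7 : 7 ≤ p) (h0 : 0 < k) (hk : k ≤ p - 1) :
    hh p (p - k) = hh p k - (k : ZMod p)⁻¹ := by
  have he : p - k = p - 1 - (k - 1) := by omega
  have h1 : k - 1 ≤ p - 1 := by omega
  rw [he, hh_refl h7 (k - 1) h1, hh_pred h0]

lemma hh2_top_sub {k : ℕ} (h7 : 7 ≤ p) (h0 : 0 < k) (hk : k ≤ p - 1) :
    hh2 p (p - k) = -hh2 p k + ((k : ZMod p)⁻¹) ^ 2 := by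
  have he : p - k = p - 1 - (k - 1) := by omega
  have h1 : k - 1 ≤ p - 1 := by omega
  rw [he, hh2_refl h7 (k - 1) h1, hh2_pred h0]
  ring

lemma cast_top_inv {k : ℕ} (h0 : 0 < k) (hk : k ≤ p - 1) :
    ((p - k : ℕ) : ZMod p)⁻¹ = -(k : ZMod p)⁻¹ := by
  rw [cast_sub' (by omega), inv_neg]

lemma half_zero {S : ZMod p} (h7 : 7 ≤ p) (h : S + S = 0) : S = 0 := by
  have h2 : 2 * S = 0 := by ring_nf; linear_combination h
  rcases mul_eq_zero.mp h2 with h' | h'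
  · exact absurd h' (two_ne h7)
  · exact h'

lemma B0 (h7 : 7 ≤ p) : ∑ k ∈ Finset.Ioc 0 (p - 1), hh p k * ((k : ZMod p)⁻¹) ^ 3 = 0 := by
  set S := ∑ k ∈ Finset.Ioc 0 (p - 1), hh p k * ((k : ZMod p)⁻¹) ^ 3 with hS
  have h1 : S = ∑ k ∈ Finset.Ioc 0 (p - 1),
      (-(hh p k * ((k : ZMod p)⁻¹) ^ 3) + ((k : ZMod p)⁻¹) ^ 4) := by
    rw [hS, refl_sum (fun k => hh p k * ((k : ZMod p)⁻¹) ^ 3)]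
    refine Finset.sum_congr rfl fun k hk => ?_
    simp only [Finset.mem_Ioc] at hk
    rw [hh_top_sub h7 hk.1 hk.2, cast_top_inv hk.1 hk.2]
    ring
  rw [Finset.sum_add_distrib, Finset.sum_neg_distrib, ← hS, P4 h7, add_zero] at h1
  refine half_zero h7 ?_
  linear_combination h1

lemma C0 (h7 : 7 ≤ p) : ∑ k ∈ Finset.Ioc 0 (p - 1), hh2 p k * ((k : ZMod p)⁻¹) ^ 2 = 0 := by
  set S := ∑ k ∈ Finset.Ioc 0 (p - 1), hh2 p k * ((k : ZMod p)⁻¹) ^ 2 with hS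
  have h1 : S = ∑ k ∈ Finset.Ioc 0 (p - 1),
      (-(hh2 p k * ((k : ZMod p)⁻¹) ^ 2) + ((k : ZMod p)⁻¹) ^ 4) := by
    rw [hS, refl_sum (fun k => hh2 p k * ((k : ZMod p)⁻¹) ^ 2)]
    refine Finset.sum_congr rfl fun k hk => ?_
    simp only [Finset.mem_Ioc] at hk
    rw [hh2_top_sub h7 hk.1 hk.2, cast_top_inv hk.1 hk.2]
    ring
  rw [Finset.sum_add_distrib, Finset.sum_neg_distrib, ← hS, P4 h7, add_zero] at h1
  refine half_zero h7 ?_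
  linear_combination h1



lemma Ioo_eq (m : ℕ) : Finset.Ioo 0 m = Finset.Ioc 0 (m - 1) := by
  ext x; simp only [Finset.mem_Ioo, Finset.mem_Ioc]; omega

lemma Ioo_reflect (m : ℕ) (g : ℕ → ZMod p) :
    ∑ i ∈ Finset.Ioo 0 m, g i = ∑ i ∈ Finset.Ioo 0 m, g (m - i) := by
  refine Finset.sum_nbij' (fun k => m - k) (fun k => m - k) ?_ ?_ ?_ ?_ ?_ <;>
      intro k hk <;> simp only [Finset.mem_Ioo] at hk ⊢
  · omega
  · omega
  · omega
  · omega
  · congr 1; omega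

lemma e2id : ∀ t : ℕ, 2 * ∑ m ∈ Finset.Ioc 0 t, hh p (m - 1) * (m : ZMod p)⁻¹
    = hh p t ^ 2 - hh2 p t := by
  intro t
  induction t with
  | zero => simp [hh_zero, hh2_zero]
  | succ t ih =>
    rw [Finset.sum_Ioc_succ_top (Nat.zero_le _), hh_succ, hh2_succ]
    simp only [Nat.add_sub_cancel]
    linear_combination ih

lemma inv_mul_pf {F : Type*} [Field F] {a b c : F} (ha : a ≠ 0) (hb : b ≠ 0) (hc : c ≠ 0)
    (h : a + b = c) : (a * b)⁻¹ = c⁻¹ * (a⁻¹ + b⁻¹) := by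
  field_simp
  linear_combination -h

lemma sum_Ioo_inv (m : ℕ) :
    ∑ i ∈ Finset.Ioo 0 m, (i : ZMod p)⁻¹ = hh p (m - 1) := by
  rw [Ioo_eq, hh]

lemma sum_Ioo_inv' (m : ℕ) :
    ∑ i ∈ Finset.Ioo 0 m, ((m - i : ℕ) : ZMod p)⁻¹ = hh p (m - 1) := by
  rw [← Ioo_reflect m (fun i => (i : ZMod p)⁻¹), sum_Ioo_inv]

lemma cast_terms {i m : ℕ} (h0 : 0 < i) (him : i < m) (hm : m ≤ p - 1) :
    (i : ZMod p) + ((m - i : ℕ) : ZMod p) = (m : ZMod p) := by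
  rw [← Nat.cast_add]
  congr 1
  omega

lemma Vval {m : ℕ} (hm0 : 0 < m) (hm : m ≤ p - 1) :
    VV p m = 2 * hh p (m - 1) * (m : ZMod p)⁻¹ := by
  have hp0 := ppos (p := p)
  have h1 : VV p m = ∑ i ∈ Finset.Ioo 0 m,
      (m : ZMod p)⁻¹ * ((i : ZMod p)⁻¹ + ((m - i : ℕ) : ZMod p)⁻¹) := by
    refine Finset.sum_congr rfl fun i hi => ?_
    simp only [Finset.mem_Ioo] at hi
    exact inv_mul_pf (cast_ne hi.1 (by omega)) (cast_ne (by omega) (by omega))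
      (cast_ne hm0 (by omega)) (cast_terms hi.1 hi.2 hm)
  rw [h1, ← Finset.mul_sum, Finset.sum_add_distrib, sum_Ioo_inv, sum_Ioo_inv']
  ring



noncomputable def WW (p n : ℕ) : ZMod p :=
  ∑ s ∈ Finset.Ioo 0 n, VV p s * ((n - s : ℕ) : ZMod p)⁻¹

noncomputable def RR (p : ℕ) : ZMod p :=
  ∑ s ∈ Finset.Ioc 0 (p - 1), VV p s * VV p (p - s)

noncomputable def DD (p : ℕ) : ZMod p :=
  ∑ k ∈ Finset.Ioc 0 (p - 1), hh p k ^ 2 * ((k : ZMod p)⁻¹) ^ 2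

lemma evalA (h7 : 7 ≤ p) :
    RR p = -4 * DD p + 4 * ∑ k ∈ Finset.Ioc 0 (p - 1), hh p k * ((k : ZMod p)⁻¹) ^ 3 := by
  have h1 : RR p = ∑ s ∈ Finset.Ioc 0 (p - 1),
      (-4 * (hh p s ^ 2 * ((s : ZMod p)⁻¹) ^ 2) + 4 * (hh p s * ((s : ZMod p)⁻¹) ^ 3)) := by
    refine Finset.sum_congr rfl fun s hs => ?_
    simp only [Finset.mem_Ioc] at hs
    rw [Vval hs.1 hs.2, Vval (m := p - s) (by omega) (by omega)]
    have e1 : p - s - 1 = p - 1 - s := by omega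
    rw [e1, hh_refl h7 s hs.2, cast_top_inv hs.1 hs.2, hh_pred hs.1]
    ring
  rw [h1, Finset.sum_add_distrib, ← Finset.mul_sum, ← Finset.mul_sum]
  rfl

lemma swapRR : RR p = ∑ l ∈ Finset.Ioc 0 (p - 1), (l : ZMod p)⁻¹ * WW p (p - l) := by
  have h1 : RR p = ∑ s ∈ Finset.Ioc 0 (p - 1), ∑ l ∈ Finset.Ioo 0 (p - s),
      VV p s * ((l : ZMod p) * ((p - s - l : ℕ) : ZMod p))⁻¹ := by
    refine Finset.sum_congr rfl fun s _ => ?_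
    nth_rewrite 2 [VV]
    rw [Finset.mul_sum]
  have h2 : ∑ l ∈ Finset.Ioc 0 (p - 1), (l : ZMod p)⁻¹ * WW p (p - l)
      = ∑ l ∈ Finset.Ioc 0 (p - 1), ∑ s ∈ Finset.Ioo 0 (p - l),
        (l : ZMod p)⁻¹ * (VV p s * ((p - l - s : ℕ) : ZMod p)⁻¹) := by
    refine Finset.sum_congr rfl fun l _ => ?_
    rw [WW, Finset.mul_sum]
  rw [h1, h2, Finset.sum_sigma', Finset.sum_sigma']
  refine Finset.sum_nbij' (fun x => ⟨x.2, x.1⟩) (fun x => ⟨x.2, x.1⟩) ?_ ?_ ?_ ?_ ?_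
  · rintro ⟨s, l⟩ hx
    simp only [Finset.mem_sigma, Finset.mem_Ioc, Finset.mem_Ioo] at hx ⊢
    omega
  · rintro ⟨l, s⟩ hx
    simp only [Finset.mem_sigma, Finset.mem_Ioc, Finset.mem_Ioo] at hx ⊢
    omega
  · rintro ⟨s, l⟩ _; rfl
  · rintro ⟨l, s⟩ _; rfl
  · rintro ⟨s, l⟩ hx
    simp only [Finset.mem_sigma, Finset.mem_Ioc, Finset.mem_Ioo] at hx
    have e1 : p - s - l = p - l - s := by omega
    rw [e1, mul_inv_rev]
    ring

lemma Gval {n : ℕ} (hn0 : 0 < n) (hn : n ≤ p - 1) :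
    ∑ s ∈ Finset.Ioo 0 n, hh p (s - 1) * ((n - s : ℕ) : ZMod p)⁻¹
      = ∑ m ∈ Finset.Ioc 0 (n - 1), VV p m := by
  have h1 : ∑ s ∈ Finset.Ioo 0 n, hh p (s - 1) * ((n - s : ℕ) : ZMod p)⁻¹
      = ∑ s ∈ Finset.Ioo 0 n, ∑ i ∈ Finset.Ioc 0 (s - 1),
        (i : ZMod p)⁻¹ * ((n - s : ℕ) : ZMod p)⁻¹ := by
    refine Finset.sum_congr rfl fun s _ => ?_
    rw [hh, Finset.sum_mul]
  have h2 : ∑ m ∈ Finset.Ioc 0 (n - 1), VV p m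
      = ∑ m ∈ Finset.Ioc 0 (n - 1), ∑ x ∈ Finset.Ioo 0 m,
        ((x : ZMod p) * ((m - x : ℕ) : ZMod p))⁻¹ := rfl
  rw [h1, h2, Finset.sum_sigma', Finset.sum_sigma']
  refine Finset.sum_nbij' (fun y => ⟨n - y.1 + y.2, y.2⟩) (fun y => ⟨n - y.1 + y.2, y.2⟩)
    ?_ ?_ ?_ ?_ ?_
  · rintro ⟨s, i⟩ hx
    simp only [Finset.mem_sigma, Finset.mem_Ioc, Finset.mem_Ioo] at hx ⊢
    omega
  · rintro ⟨m, x⟩ hx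
    simp only [Finset.mem_sigma, Finset.mem_Ioc, Finset.mem_Ioo] at hx ⊢
    omega
  · rintro ⟨s, i⟩ hx
    simp only [Finset.mem_sigma, Finset.mem_Ioc, Finset.mem_Ioo] at hx
    simp only [Sigma.mk.inj_iff, heq_eq_eq, and_true]
    omega
  · rintro ⟨m, x⟩ hx
    simp only [Finset.mem_sigma, Finset.mem_Ioc, Finset.mem_Ioo] at hx
    simp only [Sigma.mk.inj_iff, heq_eq_eq, and_true]
    omega
  · rintro ⟨s, i⟩ hx
    simp only [Finset.mem_sigma, Finset.mem_Ioc, Finset.mem_Ioo] at hx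
    have e1 : n - s + i - i = n - s := by omega
    rw [e1, mul_inv_rev]
    ring

lemma Wval {n : ℕ} (hn0 : 0 < n) (hn : n ≤ p - 1) :
    WW p n = 3 * (hh p (n - 1) ^ 2 - hh2 p (n - 1)) * (n : ZMod p)⁻¹ := by
  have hp0 := ppos (p := p)
  have hterm : ∀ s ∈ Finset.Ioo 0 n, VV p s * ((n - s : ℕ) : ZMod p)⁻¹
      = (n : ZMod p)⁻¹ * 2 * (hh p (s - 1) * (s : ZMod p)⁻¹)
        + (n : ZMod p)⁻¹ * 2 * (hh p (s - 1) * ((n - s : ℕ) : ZMod p)⁻¹) := by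
    intro s hs
    simp only [Finset.mem_Ioo] at hs
    rw [Vval hs.1 (by omega)]
    have key : (s : ZMod p)⁻¹ * ((n - s : ℕ) : ZMod p)⁻¹
        = (n : ZMod p)⁻¹ * ((s : ZMod p)⁻¹ + ((n - s : ℕ) : ZMod p)⁻¹) := by
      rw [← mul_inv]
      exact inv_mul_pf (cast_ne hs.1 (by omega)) (cast_ne (by omega) (by omega))
        (cast_ne hn0 (by omega)) (cast_terms hs.1 hs.2 hn)
    linear_combination 2 * hh p (s - 1) * key
  rw [WW, Finset.sum_congr rfl hterm, Finset.sum_add_distrib, ← Finset.mul_sum, ← Finset.mul_sum,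
    Gval hn0 hn]
  have h3 : ∑ m ∈ Finset.Ioc 0 (n - 1), VV p m
      = ∑ m ∈ Finset.Ioc 0 (n - 1), 2 * (hh p (m - 1) * (m : ZMod p)⁻¹) := by
    refine Finset.sum_congr rfl fun m hm => ?_
    simp only [Finset.mem_Ioc] at hm
    rw [Vval hm.1 (by omega)]
    ring
  rw [h3, ← Finset.mul_sum]
  have h4 := e2id (p := p) (n - 1)
  have h5 : ∑ s ∈ Finset.Ioo 0 n, hh p (s - 1) * (s : ZMod p)⁻¹
      = ∑ m ∈ Finset.Ioc 0 (n - 1), hh p (m - 1) * (m : ZMod p)⁻¹ := by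
    rw [Ioo_eq]
  rw [h5]
  linear_combination ((n : ZMod p)⁻¹ * 3) * h4

lemma evalB (h7 : 7 ≤ p) :
    RR p = -3 * DD p - 3 * ∑ k ∈ Finset.Ioc 0 (p - 1), hh2 p k * ((k : ZMod p)⁻¹) ^ 2 := by
  rw [swapRR]
  have h1 : ∀ l ∈ Finset.Ioc 0 (p - 1), (l : ZMod p)⁻¹ * WW p (p - l)
      = -3 * (hh p l ^ 2 * ((l : ZMod p)⁻¹) ^ 2) - 3 * (hh2 p l * ((l : ZMod p)⁻¹) ^ 2) := by
    intro l hl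
    simp only [Finset.mem_Ioc] at hl
    rw [Wval (n := p - l) (by omega) (by omega)]
    have e1 : p - l - 1 = p - 1 - l := by omega
    rw [e1, hh_refl h7 l hl.2, hh2_refl h7 l hl.2, cast_top_inv hl.1 hl.2]
    ring
  rw [Finset.sum_congr rfl h1, Finset.sum_sub_distrib, ← Finset.mul_sum, ← Finset.mul_sum]
  rfl

lemma D0 (h7 : 7 ≤ p) : DD p = 0 := by
  have hA := evalA (p := p) h7
  have hB := evalB (p := p) h7
  rw [B0 h7] at hA
  rw [C0 h7] at hB
  linear_combination -(hA.symm.trans hB)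



lemma telescope : ∀ j : ℕ, hh p j * hh2 p j
    = ∑ b ∈ Finset.Ioc 0 j, (hh p b * ((b : ZMod p)⁻¹) ^ 2 + (b : ZMod p)⁻¹ * hh2 p (b - 1)) := by
  intro j
  induction j with
  | zero => simp [hh_zero, hh2_zero]
  | succ j ih =>
    rw [Finset.sum_Ioc_succ_top (Nat.zero_le _), hh_succ, hh2_succ, ← ih]
    simp only [Nat.add_sub_cancel]
    ring

lemma tri_swap (N : ℕ) (F : ℕ → ℕ → ZMod p) :
    ∑ j ∈ Finset.Ioc 0 N, ∑ b ∈ Finset.Ioc 0 j, F j b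
      = ∑ b ∈ Finset.Ioc 0 N, ∑ j ∈ Finset.Icc b N, F j b := by
  rw [Finset.sum_sigma', Finset.sum_sigma']
  refine Finset.sum_nbij' (fun x => ⟨x.2, x.1⟩) (fun x => ⟨x.2, x.1⟩) ?_ ?_ ?_ ?_ ?_
  · rintro ⟨j, b⟩ hx
    simp only [Finset.mem_sigma, Finset.mem_Ioc, Finset.mem_Icc] at hx ⊢
    omega
  · rintro ⟨b, j⟩ hx
    simp only [Finset.mem_sigma, Finset.mem_Ioc, Finset.mem_Icc] at hx ⊢
    omega
  · rintro ⟨j, b⟩ _; rfl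
  · rintro ⟨b, j⟩ _; rfl
  · rintro ⟨j, b⟩ _; rfl

lemma tail1 {b : ℕ} (h7 : 7 ≤ p) (hb0 : 0 < b) (hb : b ≤ p - 1) :
    ∑ j ∈ Finset.Icc b (p - 1), (j : ZMod p)⁻¹ = -hh p (b - 1) := by
  have he : Finset.Ioc (b - 1) (p - 1) = Finset.Icc b (p - 1) := by
    ext x; simp only [Finset.mem_Ioc, Finset.mem_Icc]; omega
  have h1 := Finset.sum_Ioc_consecutive (fun j => (j : ZMod p)⁻¹)
    (Nat.zero_le (b - 1)) (show b - 1 ≤ p - 1 by omega)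
  rw [he] at h1
  have h2 : hh p (p - 1) = 0 := P1 h7
  rw [hh] at h2 ⊢
  rw [h2] at h1
  linear_combination h1

noncomputable def MM (p : ℕ) : ZMod p :=
  ∑ j ∈ Finset.Ioc 0 (p - 1), hh p j * hh2 p j * (j : ZMod p)⁻¹

lemma M0 (h7 : 7 ≤ p) : MM p = 0 := by
  have h1 : ∑ j ∈ Finset.Ioc 0 (p - 1), hh p j * hh2 p j * (j : ZMod p)⁻¹
      = ∑ j ∈ Finset.Ioc 0 (p - 1), ∑ b ∈ Finset.Ioc 0 j,
      ((hh p b * ((b : ZMod p)⁻¹) ^ 2 + (b : ZMod p)⁻¹ * hh2 p (b - 1)) * (j : ZMod p)⁻¹) := by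
    refine Finset.sum_congr rfl fun j _ => ?_
    rw [telescope j, Finset.sum_mul]
  have h2 : ∀ b ∈ Finset.Ioc 0 (p - 1), ∑ j ∈ Finset.Icc b (p - 1),
      ((hh p b * ((b : ZMod p)⁻¹) ^ 2 + (b : ZMod p)⁻¹ * hh2 p (b - 1)) * (j : ZMod p)⁻¹)
      = -(hh p b ^ 2 * ((b : ZMod p)⁻¹) ^ 2) + 2 * (hh p b * ((b : ZMod p)⁻¹) ^ 3)
        - hh p b * hh2 p b * (b : ZMod p)⁻¹ + hh2 p b * ((b : ZMod p)⁻¹) ^ 2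
        - ((b : ZMod p)⁻¹) ^ 4 := by
    intro b hb
    simp only [Finset.mem_Ioc] at hb
    rw [← Finset.mul_sum, tail1 h7 hb.1 hb.2, hh_pred hb.1, hh2_pred hb.1]
    ring
  have key : ∑ j ∈ Finset.Ioc 0 (p - 1), hh p j * hh2 p j * (j : ZMod p)⁻¹
      = -(∑ b ∈ Finset.Ioc 0 (p - 1), hh p b ^ 2 * ((b : ZMod p)⁻¹) ^ 2)
        + 2 * (∑ b ∈ Finset.Ioc 0 (p - 1), hh p b * ((b : ZMod p)⁻¹) ^ 3)
        - ∑ b ∈ Finset.Ioc 0 (p - 1), hh p b * hh2 p b * (b : ZMod p)⁻¹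
        + ∑ b ∈ Finset.Ioc 0 (p - 1), hh2 p b * ((b : ZMod p)⁻¹) ^ 2
        - ∑ b ∈ Finset.Ioc 0 (p - 1), ((b : ZMod p)⁻¹) ^ 4 := by
    conv_lhs => rw [h1, tri_swap, Finset.sum_congr rfl h2]
    simp only [Finset.sum_add_distrib, Finset.sum_sub_distrib, Finset.sum_neg_distrib,
      ← Finset.mul_sum]
  have hD := D0 (p := p) h7
  rw [DD] at hD
  rw [B0 h7, C0 h7, P4 h7, hD] at key
  refine half_zero h7 ?_
  rw [MM]
  linear_combination key



lemma tail_inv (h7 : 7 ≤ p) {j : ℕ} (hj : j ≤ p - 1) :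
    ∑ k ∈ Finset.Ioc j (p - 1), (k : ZMod p)⁻¹ = -hh p j := by
  have h1 := Finset.sum_Ioc_consecutive (fun k => (k : ZMod p)⁻¹) (Nat.zero_le j) hj
  have h2 := P1 (p := p) h7
  rw [hh] at h2
  rw [hh]
  linear_combination h1 + h2

lemma tail_inv2 (h7 : 7 ≤ p) {j : ℕ} (hj : j ≤ p - 1) :
    ∑ k ∈ Finset.Ioc j (p - 1), ((k : ZMod p)⁻¹) ^ 2 = -hh2 p j := by
  have h1 := Finset.sum_Ioc_consecutive (fun k => ((k : ZMod p)⁻¹) ^ 2) (Nat.zero_le j) hj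
  have h2 := P2 (p := p) h7
  rw [hh2] at h2
  rw [hh2]
  linear_combination h1 + h2

lemma nested_reduce (f g : ℕ → ZMod p) :
    ∑ i ∈ Finset.Ioc 0 (p - 1), f i * ∑ j ∈ Finset.Ioc i (p - 1), g j
      = ∑ j ∈ Finset.Ioc 0 (p - 1), (∑ i ∈ Finset.Ioc 0 (j - 1), f i) * g j := by
  have h1 : ∑ i ∈ Finset.Ioc 0 (p - 1), f i * ∑ j ∈ Finset.Ioc i (p - 1), g j
      = ∑ i ∈ Finset.Ioc 0 (p - 1), ∑ j ∈ Finset.Ioc i (p - 1), f i * g j := by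
    refine Finset.sum_congr rfl fun i _ => ?_
    rw [Finset.mul_sum]
  have h2 : ∑ j ∈ Finset.Ioc 0 (p - 1), (∑ i ∈ Finset.Ioc 0 (j - 1), f i) * g j
      = ∑ j ∈ Finset.Ioc 0 (p - 1), ∑ i ∈ Finset.Ioc 0 (j - 1), f i * g j := by
    refine Finset.sum_congr rfl fun j _ => ?_
    rw [Finset.sum_mul]
  rw [h1, h2, Finset.sum_sigma', Finset.sum_sigma']
  refine Finset.sum_nbij' (fun x => ⟨x.2, x.1⟩) (fun x => ⟨x.2, x.1⟩) ?_ ?_ ?_ ?_ ?_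
  · rintro ⟨i, j⟩ hx
    simp only [Finset.mem_sigma, Finset.mem_Ioc] at hx ⊢
    omega
  · rintro ⟨j, i⟩ hx
    simp only [Finset.mem_sigma, Finset.mem_Ioc] at hx ⊢
    omega
  · rintro ⟨i, j⟩ _; rfl
  · rintro ⟨j, i⟩ _; rfl
  · rintro ⟨i, j⟩ _; rfl

lemma Z121 (h7 : 7 ≤ p) :
    ∑ i ∈ Finset.Ioc 0 (p - 1), (i : ZMod p)⁻¹ * ∑ j ∈ Finset.Ioc i (p - 1),
      ((j : ZMod p)⁻¹) ^ 2 * ∑ k ∈ Finset.Ioc j (p - 1), (k : ZMod p)⁻¹ = 0 := by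
  have h1 : ∀ i ∈ Finset.Ioc 0 (p - 1), ∑ j ∈ Finset.Ioc i (p - 1),
      ((j : ZMod p)⁻¹) ^ 2 * ∑ k ∈ Finset.Ioc j (p - 1), (k : ZMod p)⁻¹
      = ∑ j ∈ Finset.Ioc i (p - 1), ((j : ZMod p)⁻¹) ^ 2 * -hh p j := by
    intro i _
    refine Finset.sum_congr rfl fun j hj => ?_
    simp only [Finset.mem_Ioc] at hj
    rw [tail_inv h7 hj.2]
  rw [Finset.sum_congr rfl fun i hi => by rw [h1 i hi],
    nested_reduce (fun i => (i : ZMod p)⁻¹) (fun j => ((j : ZMod p)⁻¹) ^ 2 * -hh p j)]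
  have h2 : ∀ j ∈ Finset.Ioc 0 (p - 1),
      (∑ i ∈ Finset.Ioc 0 (j - 1), (i : ZMod p)⁻¹) * (((j : ZMod p)⁻¹) ^ 2 * -hh p j)
      = -(hh p j ^ 2 * ((j : ZMod p)⁻¹) ^ 2) + hh p j * ((j : ZMod p)⁻¹) ^ 3 := by
    intro j hj
    simp only [Finset.mem_Ioc] at hj
    have : ∑ i ∈ Finset.Ioc 0 (j - 1), (i : ZMod p)⁻¹ = hh p (j - 1) := rfl
    rw [this, hh_pred hj.1]
    ring
  rw [Finset.sum_congr rfl h2, Finset.sum_add_distrib, Finset.sum_neg_distrib]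
  have hD := D0 (p := p) h7
  rw [DD] at hD
  rw [hD, B0 h7]
  simp

lemma Z112 (h7 : 7 ≤ p) :
    ∑ i ∈ Finset.Ioc 0 (p - 1), (i : ZMod p)⁻¹ * ∑ j ∈ Finset.Ioc i (p - 1),
      (j : ZMod p)⁻¹ * ∑ k ∈ Finset.Ioc j (p - 1), ((k : ZMod p)⁻¹) ^ 2 = 0 := by
  have h1 : ∀ i ∈ Finset.Ioc 0 (p - 1), ∑ j ∈ Finset.Ioc i (p - 1),
      (j : ZMod p)⁻¹ * ∑ k ∈ Finset.Ioc j (p - 1), ((k : ZMod p)⁻¹) ^ 2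
      = ∑ j ∈ Finset.Ioc i (p - 1), (j : ZMod p)⁻¹ * -hh2 p j := by
    intro i _
    refine Finset.sum_congr rfl fun j hj => ?_
    simp only [Finset.mem_Ioc] at hj
    rw [tail_inv2 h7 hj.2]
  rw [Finset.sum_congr rfl fun i hi => by rw [h1 i hi],
    nested_reduce (fun i => (i : ZMod p)⁻¹) (fun j => (j : ZMod p)⁻¹ * -hh2 p j)]
  have h2 : ∀ j ∈ Finset.Ioc 0 (p - 1),
      (∑ i ∈ Finset.Ioc 0 (j - 1), (i : ZMod p)⁻¹) * ((j : ZMod p)⁻¹ * -hh2 p j)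
      = -(hh p j * hh2 p j * (j : ZMod p)⁻¹) + hh2 p j * ((j : ZMod p)⁻¹) ^ 2 := by
    intro j hj
    simp only [Finset.mem_Ioc] at hj
    have : ∑ i ∈ Finset.Ioc 0 (j - 1), (i : ZMod p)⁻¹ = hh p (j - 1) := rfl
    rw [this, hh_pred hj.1]
    ring
  rw [Finset.sum_congr rfl h2, Finset.sum_add_distrib, Finset.sum_neg_distrib]
  have hM := M0 (p := p) h7
  rw [MM] at hM
  rw [hM, C0 h7]
  simp

lemma Z211 (h7 : 7 ≤ p) :
    ∑ i ∈ Finset.Ioc 0 (p - 1), ((i : ZMod p)⁻¹) ^ 2 * ∑ j ∈ Finset.Ioc i (p - 1),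
      (j : ZMod p)⁻¹ * ∑ k ∈ Finset.Ioc j (p - 1), (k : ZMod p)⁻¹ = 0 := by
  have h1 : ∀ i ∈ Finset.Ioc 0 (p - 1), ∑ j ∈ Finset.Ioc i (p - 1),
      (j : ZMod p)⁻¹ * ∑ k ∈ Finset.Ioc j (p - 1), (k : ZMod p)⁻¹
      = ∑ j ∈ Finset.Ioc i (p - 1), (j : ZMod p)⁻¹ * -hh p j := by
    intro i _
    refine Finset.sum_congr rfl fun j hj => ?_
    simp only [Finset.mem_Ioc] at hj
    rw [tail_inv h7 hj.2]
  rw [Finset.sum_congr rfl fun i hi => by rw [h1 i hi],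
    nested_reduce (fun i => ((i : ZMod p)⁻¹) ^ 2) (fun j => (j : ZMod p)⁻¹ * -hh p j)]
  have h2 : ∀ j ∈ Finset.Ioc 0 (p - 1),
      (∑ i ∈ Finset.Ioc 0 (j - 1), ((i : ZMod p)⁻¹) ^ 2) * ((j : ZMod p)⁻¹ * -hh p j)
      = -(hh p j * hh2 p j * (j : ZMod p)⁻¹) + hh p j * ((j : ZMod p)⁻¹) ^ 3 := by
    intro j hj
    simp only [Finset.mem_Ioc] at hj
    have : ∑ i ∈ Finset.Ioc 0 (j - 1), ((i : ZMod p)⁻¹) ^ 2 = hh2 p (j - 1) := rfl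
    rw [this, hh2_pred hj.1]
    ring
  rw [Finset.sum_congr rfl h2, Finset.sum_add_distrib, Finset.sum_neg_distrib]
  have hM := M0 (p := p) h7
  rw [MM] at hM
  rw [hM, B0 h7]
  simp



noncomputable def ZHaux (p : ℕ) : List ℕ → ℕ → ℕ → ZMod p
  | [], _, _ => 1
  | a :: t, m, n => ∑ k ∈ Finset.Ioc m n, ((k : ZMod p)⁻¹) ^ a * ZHaux p t k n

def Haux' : List ℕ → ℕ → ℕ → ℚ
  | [], _, _ => 1
  | a :: t, m, n => ∑ k ∈ Finset.Ioc m n, (1 / (k : ℚ) ^ a) * Haux' t k n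

lemma den_dvd_ne {d e : ℕ} (hd : d ∣ e) (he : (e : ZMod p) ≠ 0) : (d : ZMod p) ≠ 0 := by
  intro h0
  apply he
  rw [ZMod.natCast_eq_zero_iff] at h0 ⊢
  exact h0.trans hd

lemma den_add_ne {a b : ℚ} (ha : ((a.den : ℕ) : ZMod p) ≠ 0) (hb : ((b.den : ℕ) : ZMod p) ≠ 0) :
    (((a + b).den : ℕ) : ZMod p) ≠ 0 :=
  den_dvd_ne (Rat.add_den_dvd a b) (by push_cast; exact mul_ne_zero ha hb)

lemma den_mul_ne {a b : ℚ} (ha : ((a.den : ℕ) : ZMod p) ≠ 0) (hb : ((b.den : ℕ) : ZMod p) ≠ 0) :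
    (((a * b).den : ℕ) : ZMod p) ≠ 0 :=
  den_dvd_ne (Rat.mul_den_dvd a b) (by push_cast; exact mul_ne_zero ha hb)

lemma sum_cast_den {s : Finset ℕ} {f : ℕ → ℚ}
    (h : ∀ i ∈ s, (((f i).den : ℕ) : ZMod p) ≠ 0) :
    (((∑ i ∈ s, f i).den : ℕ) : ZMod p) ≠ 0 ∧
      (((∑ i ∈ s, f i : ℚ)) : ZMod p) = ∑ i ∈ s, ((f i : ℚ) : ZMod p) := by
  classical
  induction s using Finset.induction_on with
  | empty => simp
  | @insert x s hx ih =>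
    have hix := h x (Finset.mem_insert_self x s)
    have ih' := ih fun i hi => h i (Finset.mem_insert_of_mem hi)
    rw [Finset.sum_insert hx, Finset.sum_insert hx]
    exact ⟨den_add_ne hix ih'.1, by rw [Rat.cast_add_of_ne_zero hix ih'.1, ih'.2]⟩

lemma term_den (k a : ℕ) (h0 : 0 < k) (hk : k < p) :
    (((1 / (k : ℚ) ^ a).den : ℕ) : ZMod p) ≠ 0 ∧
      ((1 / (k : ℚ) ^ a : ℚ) : ZMod p) = ((k : ZMod p)⁻¹) ^ a := by
  have hca : (1 / (k : ℚ) ^ a) = (((k ^ a : ℕ) : ℚ))⁻¹ := by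
    push_cast [one_div]
    rfl
  have hpow : 0 < k ^ a := Nat.pow_pos h0
  have hden : ((((k ^ a : ℕ) : ℚ))⁻¹).den = k ^ a := Rat.inv_natCast_den_of_pos hpow
  have hkK : (k : ZMod p) ≠ 0 := cast_ne h0 hk
  have hnum : ((((k ^ a : ℕ) : ℚ)).num : ZMod p) ≠ 0 := by
    rw [Rat.num_natCast]
    push_cast
    exact pow_ne_zero a hkK
  constructor
  · rw [hca, hden]
    push_cast
    exact pow_ne_zero a hkK
  · rw [hca, Rat.cast_inv_of_ne_zero hnum, Rat.cast_natCast, inv_pow]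
    norm_cast

lemma Haux_cast (t : List ℕ) : ∀ m n : ℕ, n ≤ p - 1 →
    (((Haux' t m n).den : ℕ) : ZMod p) ≠ 0 ∧
      ((Haux' t m n : ℚ) : ZMod p) = ZHaux p t m n := by
  induction t with
  | nil => intro m n _; simp [Haux', ZHaux]
  | cons a t ih =>
    intro m n hn
    have hterm : ∀ k ∈ Finset.Ioc m n,
        ((((1 / (k : ℚ) ^ a) * Haux' t k n).den : ℕ) : ZMod p) ≠ 0 ∧
        (((1 / (k : ℚ) ^ a) * Haux' t k n : ℚ) : ZMod p)
          = ((k : ZMod p)⁻¹) ^ a * ZHaux p t k n := by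
      intro k hk
      simp only [Finset.mem_Ioc] at hk
      have h0k : 0 < k := by omega
      have hkp : k < p := by have := ppos (p := p); omega
      have h1 := term_den (p := p) k a h0k hkp
      have h2 := ih k n hn
      exact ⟨den_mul_ne h1.1 h2.1, by rw [Rat.cast_mul_of_ne_zero h1.1 h2.1, h1.2, h2.2]⟩
    have hsum := sum_cast_den (p := p) (s := Finset.Ioc m n)
      (f := fun k => (1 / (k : ℚ) ^ a) * Haux' t k n) (fun i hi => (hterm i hi).1)
    refine ⟨hsum.1, ?_⟩
    rw [show Haux' (a :: t) m n = ∑ k ∈ Finset.Ioc m n, (1 / (k : ℚ) ^ a) * Haux' t k n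
      from rfl, hsum.2]
    rw [show ZHaux p (a :: t) m n = ∑ k ∈ Finset.Ioc m n, ((k : ZMod p)⁻¹) ^ a * ZHaux p t k n
      from rfl]
    exact Finset.sum_congr rfl fun i hi => (hterm i hi).2

lemma num_dvd_of_cast_eq_zero {q : ℚ} (hden : ((q.den : ℕ) : ZMod p) ≠ 0)
    (h : (q : ZMod p) = 0) : (p : ℤ) ∣ q.num := by
  rw [← ZMod.intCast_zmod_eq_zero_iff_dvd]
  have hq : (q.num : ℚ) = q * (q.den : ℚ) := by
    have hden0 : ((q.den : ℚ)) ≠ 0 := by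
      exact_mod_cast q.den_ne_zero
    exact (div_eq_iff hden0).mp (Rat.num_div_den q)
  have hd1 : (((q.den : ℚ)).den : ZMod p) ≠ 0 := by
    rw [Rat.den_natCast]
    simp
  have h2 : ((q.num : ℚ) : ZMod p) = 0 := by
    rw [hq, Rat.cast_mul_of_ne_zero hden hd1, h, zero_mul]
  rwa [Rat.cast_intCast] at h2



end MHSproof

lemma Haux_eq_Haux' : ∀ (t : List ℕ) (m n : ℕ), Haux t m n = MHSproof.Haux' t m n := by
  intro t
  induction t with
  | nil => intro m n; rfl
  | cons a t ih =>
    intro m n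
    show (∑ k ∈ Finset.Ioc m n, (1 / (k : ℚ) ^ a) * Haux t k n) = _
    rw [show MHSproof.Haux' (a :: t) m n
      = ∑ k ∈ Finset.Ioc m n, (1 / (k : ℚ) ^ a) * MHSproof.Haux' t k n from rfl]
    exact Finset.sum_congr rfl fun k _ => by rw [ih]

/-- For every prime p ≥ 7, H(1,2,1;p−1), H(1,1,2;p−1), H(2,1,1;p−1) ≡ 0 (mod p). -/
theorem H_weight4_length3_cong_zero (p : ℕ) (hp : p.Prime) (h7 : 7 ≤ p) :
    (p : ℤ) ∣ (H [1, 2, 1] (p - 1)).num ∧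
    (p : ℤ) ∣ (H [1, 1, 2] (p - 1)).num ∧
    (p : ℤ) ∣ (H [2, 1, 1] (p - 1)).num := by
  haveI : Fact p.Prime := ⟨hp⟩
  have hle : p - 1 ≤ p - 1 := le_refl _
  have c121 := MHSproof.Haux_cast (p := p) [1, 2, 1] 0 (p - 1) hle
  have c112 := MHSproof.Haux_cast (p := p) [1, 1, 2] 0 (p - 1) hle
  have c211 := MHSproof.Haux_cast (p := p) [2, 1, 1] 0 (p - 1) hle
  have e121 : H [1, 2, 1] (p - 1) = MHSproof.Haux' [1, 2, 1] 0 (p - 1) := Haux_eq_Haux' _ _ _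
  have e112 : H [1, 1, 2] (p - 1) = MHSproof.Haux' [1, 1, 2] 0 (p - 1) := Haux_eq_Haux' _ _ _
  have e211 : H [2, 1, 1] (p - 1) = MHSproof.Haux' [2, 1, 1] 0 (p - 1) := Haux_eq_Haux' _ _ _
  have z121 : MHSproof.ZHaux p [1, 2, 1] 0 (p - 1) = 0 := by
    show (∑ i ∈ Finset.Ioc 0 (p - 1), ((i : ZMod p)⁻¹) ^ 1 * MHSproof.ZHaux p [2, 1] i (p - 1))
      = 0
    simp only [MHSproof.ZHaux, pow_one, mul_one]
    exact MHSproof.Z121 h7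
  have z112 : MHSproof.ZHaux p [1, 1, 2] 0 (p - 1) = 0 := by
    show (∑ i ∈ Finset.Ioc 0 (p - 1), ((i : ZMod p)⁻¹) ^ 1 * MHSproof.ZHaux p [1, 2] i (p - 1))
      = 0
    simp only [MHSproof.ZHaux, pow_one, mul_one]
    exact MHSproof.Z112 h7
  have z211 : MHSproof.ZHaux p [2, 1, 1] 0 (p - 1) = 0 := by
    show (∑ i ∈ Finset.Ioc 0 (p - 1), ((i : ZMod p)⁻¹) ^ 2 * MHSproof.ZHaux p [1, 1] i (p - 1))
      = 0
    simp only [MHSproof.ZHaux, pow_one, mul_one]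
    exact MHSproof.Z211 h7
  refine ⟨?_, ?_, ?_⟩
  · rw [e121]
    exact MHSproof.num_dvd_of_cast_eq_zero c121.1 (by rw [c121.2, z121])
  · rw [e112]
    exact MHSproof.num_dvd_of_cast_eq_zero c112.1 (by rw [c112.2, z112])
  · rw [e211]
    exact MHSproof.num_dvd_of_cast_eq_zero c211.1 (by rw [c211.2, z211])
end

section
/- For all odd positive integers r, s, every positive integer n, and every prime p ≥ 2n(r+s), the multiple harmonic sum H({r,s}^n; p−1) (exponent pattern r,s repeated n times, total length 2n) satisfies H({r,s}^n; p−1) ≡ 0 mod p. -/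
open Finset Polynomial Matrix

def hz (p : ℕ) : List ℕ → ℕ → ZMod p
  | [], _ => 1
  | a :: t, m => ∑ k ∈ Finset.Ioc m (p - 1), ((k : ZMod p) ^ a)⁻¹ * hz p t k

lemma hz_cons (p a m : ℕ) (t : List ℕ) :
    hz p (a :: t) m = ∑ k ∈ Finset.Ioc m (p - 1), ((k : ZMod p) ^ a)⁻¹ * hz p t k := rfl

lemma hz_top (p a : ℕ) (t : List ℕ) : hz p (a :: t) (p - 1) = 0 := by
  rw [hz_cons, Finset.Ioc_self, Finset.sum_empty]

lemma Ioc_split (m n : ℕ) (h : m < n) :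
    Finset.Ioc m n = insert (m + 1) (Finset.Ioc (m + 1) n) := by
  rw [Finset.Ioc_insert_left (by omega), Finset.Icc_add_one_left_eq_Ioc]

lemma hz_step (p a m : ℕ) (t : List ℕ) (h : m < p - 1) :
    hz p (a :: t) m
      = (((m + 1 : ℕ) : ZMod p) ^ a)⁻¹ * hz p t (m + 1) + hz p (a :: t) (m + 1) := by
  rw [hz_cons, hz_cons, Ioc_split m (p-1) h, Finset.sum_insert (by simp)]

def wa (r s j : ℕ) : List ℕ := (List.replicate j [r, s]).flatten
def wb (r s j : ℕ) : List ℕ := (List.replicate j [s, r]).flatten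

lemma wa_zero (r s : ℕ) : wa r s 0 = [] := rfl
lemma wb_zero (r s : ℕ) : wb r s 0 = [] := rfl
lemma wa_succ (r s j : ℕ) : wa r s (j + 1) = r :: s :: wa r s j := by
  simp [wa, List.replicate_succ]
lemma wb_succ (r s j : ℕ) : wb r s (j + 1) = s :: r :: wb r s j := by
  simp [wb, List.replicate_succ]

noncomputable def Mk (p r s k : ℕ) : Matrix (Fin 2) (Fin 2) (Polynomial (ZMod p)) :=
  !![1, Polynomial.C (((k : ZMod p) ^ r)⁻¹);
     Polynomial.C (((k : ZMod p) ^ s)⁻¹) * Polynomial.X, 1]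

lemma Mk00 (p r s k : ℕ) : Mk p r s k 0 0 = 1 := by simp [Mk]
lemma Mk01 (p r s k : ℕ) : Mk p r s k 0 1 = Polynomial.C (((k : ZMod p) ^ r)⁻¹) := by simp [Mk]
lemma Mk10 (p r s k : ℕ) :
    Mk p r s k 1 0 = Polynomial.C (((k : ZMod p) ^ s)⁻¹) * Polynomial.X := by simp [Mk]
lemma Mk11 (p r s k : ℕ) : Mk p r s k 1 1 = 1 := by simp [Mk]

noncomputable def Pdown (p r s : ℕ) : ℕ → Matrix (Fin 2) (Fin 2) (Polynomial (ZMod p))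
  | 0 => 1
  | i + 1 => Mk p r s (p - 1 - i) * Pdown p r s i

noncomputable def Pup (p r s : ℕ) : ℕ → Matrix (Fin 2) (Fin 2) (Polynomial (ZMod p))
  | 0 => 1
  | i + 1 => Pup p r s i * Mk p r s (i + 1)


lemma Pdown_zero (p r s : ℕ) : Pdown p r s 0 = 1 := rfl
lemma Pdown_succ (p r s i : ℕ) : Pdown p r s (i+1) = Mk p r s (p - 1 - i) * Pdown p r s i := rfl
lemma Pup_zero (p r s : ℕ) : Pup p r s 0 = 1 := rfl
lemma Pup_succ (p r s i : ℕ) : Pup p r s (i+1) = Pup p r s i * Mk p r s (i + 1) := rfl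

lemma mul_apply_two {R : Type*} [CommRing R] (A B : Matrix (Fin 2) (Fin 2) R) (i j : Fin 2) :
    (A * B) i j = A i 0 * B 0 j + A i 1 * B 1 j := by
  rw [Matrix.mul_apply, Fin.sum_univ_two]

lemma natCast_sub_eq_neg (p k : ℕ) (hk : k ≤ p) : ((p - k : ℕ) : ZMod p) = -(k : ZMod p) := by
  have h : ((p - k) + k : ℕ) = p := by omega
  have h2 : (((p - k) + k : ℕ) : ZMod p) = 0 := by rw [h]; exact ZMod.natCast_self p
  push_cast at h2
  linear_combination h2

lemma adjugate_Mk (p r s k : ℕ) [Fact p.Prime] (hrodd : Odd r) (hsodd : Odd s)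
    (hk : k ≤ p) : (Mk p r s k).adjugate = Mk p r s (p - k) := by
  have hr : (((p - k : ℕ) : ZMod p) ^ r)⁻¹ = -(((k : ZMod p) ^ r)⁻¹) := by
    rw [natCast_sub_eq_neg p k hk, hrodd.neg_pow, inv_neg]
  have hs : (((p - k : ℕ) : ZMod p) ^ s)⁻¹ = -(((k : ZMod p) ^ s)⁻¹) := by
    rw [natCast_sub_eq_neg p k hk, hsodd.neg_pow, inv_neg]
  rw [Mk, Mk, Matrix.adjugate_fin_two, hr, hs]
  ext i j
  fin_cases i <;> fin_cases j <;> simp [neg_mul]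

lemma det_Mk (p r s k : ℕ) [Fact p.Prime] :
    (Mk p r s k).det = 1 - Polynomial.C (((k : ZMod p) ^ (r + s))⁻¹) * Polynomial.X := by
  rw [Mk, Matrix.det_fin_two_of, pow_add, mul_inv, _root_.map_mul]
  ring

lemma Pdown_adj (p r s : ℕ) [Fact p.Prime] (hrodd : Odd r) (hsodd : Odd s) :
    ∀ i, i ≤ p - 1 → (Pdown p r s i).adjugate = Pup p r s i := by
  intro i
  induction i with
  | zero => intro _; simp [Pdown_zero, Pup_zero]
  | succ i ih =>
    intro hi
    have h2 : p - (p - 1 - i) = i + 1 := by omega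
    rw [Pdown_succ, Matrix.adjugate_mul_distrib, ih (by omega),
      adjugate_Mk p r s _ hrodd hsodd (by omega), h2, Pup_succ]

lemma Pup_mul_Pdown (p r s : ℕ) :
    ∀ m, m ≤ p - 1 → Pup p r s m * Pdown p r s (p - 1 - m) = Pdown p r s (p - 1) := by
  intro m
  induction m with
  | zero => intro _; simp [Pup_zero]
  | succ m ih =>
    intro hm
    have h1 : p - 1 - m = (p - 1 - (m + 1)) + 1 := by omega
    have h2 : p - 1 - (p - 1 - (m + 1)) = m + 1 := by omega
    rw [Pup_succ, mul_assoc, ← ih (by omega), h1, Pdown_succ, h2]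

lemma Pdown_selfadj (p r s : ℕ) [Fact p.Prime] (hrodd : Odd r) (hsodd : Odd s) :
    (Pdown p r s (p - 1)).adjugate = Pdown p r s (p - 1) := by
  rw [Pdown_adj p r s hrodd hsodd (p - 1) le_rfl, ← Pup_mul_Pdown p r s (p - 1) le_rfl,
    Nat.sub_self, Pdown_zero, mul_one]

lemma Pdown_det (p r s : ℕ) [Fact p.Prime] :
    ∀ i, i ≤ p - 1 → (Pdown p r s i).det
      = ∏ k ∈ Finset.Ioc (p - 1 - i) (p - 1),
          (1 - Polynomial.C (((k : ZMod p) ^ (r + s))⁻¹) * Polynomial.X) := by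
  intro i
  induction i with
  | zero => intro _; simp [Pdown_zero]
  | succ i ih =>
    intro hi
    have h1 : (p - 1 - (i + 1)) + 1 = p - 1 - i := by omega
    rw [Pdown_succ, Matrix.det_mul, det_Mk, ih (by omega),
      Ioc_split (p - 1 - (i + 1)) (p - 1) (by omega), Finset.prod_insert (by simp), h1]

lemma Pdown_entries (p r s : ℕ) [Fact p.Prime] :
    ∀ i, i ≤ p - 1 →
      (∀ j, ((Pdown p r s i) 0 0).coeff j = hz p (wa r s j) (p - 1 - i))
    ∧ (∀ j, ((Pdown p r s i) 0 1).coeff j = hz p (r :: wb r s j) (p - 1 - i))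
    ∧ (((Pdown p r s i) 1 0).coeff 0 = 0
        ∧ ∀ j, ((Pdown p r s i) 1 0).coeff (j + 1) = hz p (s :: wa r s j) (p - 1 - i))
    ∧ (∀ j, ((Pdown p r s i) 1 1).coeff j = hz p (wb r s j) (p - 1 - i)) := by
  intro i
  induction i with
  | zero =>
    intro _
    rw [Nat.sub_zero, Pdown_zero]
    refine ⟨fun j => ?_, fun j => ?_, ⟨?_, fun j => ?_⟩, fun j => ?_⟩
    · rw [Matrix.one_apply_eq]
      cases j with
      | zero => simp [wa_zero, hz]
      | succ j => rw [wa_succ, hz_top, Polynomial.coeff_one]; simp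
    · rw [Matrix.one_apply_ne (by decide), hz_top]; exact Polynomial.coeff_zero _
    · rw [Matrix.one_apply_ne (by decide)]; exact Polynomial.coeff_zero _
    · rw [Matrix.one_apply_ne (by decide), hz_top]; exact Polynomial.coeff_zero _
    · rw [Matrix.one_apply_eq]
      cases j with
      | zero => simp [wb_zero, hz]
      | succ j => rw [wb_succ, hz_top, Polynomial.coeff_one]; simp
  | succ i ih =>
    intro hi
    obtain ⟨h00, h01, ⟨h100, h10⟩, h11⟩ := ih (by omega)
    set m := p - 1 - (i + 1) with hm
    have hm1 : p - 1 - i = m + 1 := by omega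
    have hmlt : m < p - 1 := by omega
    rw [hm1] at h00 h01 h10 h11
    have hk : p - 1 - i = m + 1 := hm1
    rw [Pdown_succ, hk]
    refine ⟨fun j => ?_, fun j => ?_, ⟨?_, fun j => ?_⟩, fun j => ?_⟩
    · rw [mul_apply_two, Mk00, Mk01, one_mul, Polynomial.coeff_add, Polynomial.coeff_C_mul]
      cases j with
      | zero => rw [h00 0, h100, wa_zero, mul_zero, add_zero]; rfl
      | succ j =>
        rw [h00 (j+1), h10 j, wa_succ, hz_step p r m (s :: wa r s j) hmlt, add_comm]
    · rw [mul_apply_two, Mk00, Mk01, one_mul, Polynomial.coeff_add, Polynomial.coeff_C_mul,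
        h01 j, h11 j, hz_step p r m (wb r s j) hmlt, add_comm]
    · rw [mul_apply_two, Mk10, Mk11, one_mul, Polynomial.coeff_add, mul_assoc,
        Polynomial.coeff_C_mul, h100]
      have hx : (Polynomial.X * (Pdown p r s i 0 0)).coeff 0 = 0 := by
        rw [Polynomial.mul_coeff_zero, Polynomial.coeff_X_zero, zero_mul]
      rw [hx, mul_zero, zero_add]
    · rw [mul_apply_two, Mk10, Mk11, one_mul, Polynomial.coeff_add, mul_assoc,
        Polynomial.coeff_C_mul, Polynomial.coeff_X_mul, h00 j, h10 j,
        hz_step p s m (wa r s j) hmlt]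
    · rw [mul_apply_two, Mk10, Mk11, one_mul, Polynomial.coeff_add, mul_assoc,
        Polynomial.coeff_C_mul]
      cases j with
      | zero =>
        have hx : (Polynomial.X * (Pdown p r s i 0 1)).coeff 0 = 0 := by
          rw [Polynomial.mul_coeff_zero, Polynomial.coeff_X_zero, zero_mul]
        rw [hx, mul_zero, zero_add, h11 0, wb_zero]; rfl
      | succ j =>
        rw [Polynomial.coeff_X_mul, h01 j, h11 (j+1), wb_succ,
          hz_step p s m (r :: wb r s j) hmlt]

lemma prod_Ioc_eq_prod_units {β : Type*} [CommMonoid β] (p : ℕ) [Fact p.Prime]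
    (f : ZMod p → β) :
    ∏ k ∈ Finset.Ioc 0 (p - 1), f (k : ZMod p) = ∏ u : (ZMod p)ˣ, f (u : ZMod p) := by
  have hp : p.Prime := Fact.out
  haveI : NeZero p := ⟨hp.pos.ne'⟩
  symm
  refine Finset.prod_bij (fun u _ => ZMod.val (u : ZMod p)) ?_ ?_ ?_ ?_
  · intro u _
    rw [Finset.mem_Ioc]
    constructor
    · rcases Nat.eq_zero_or_pos (ZMod.val (u : ZMod p)) with h | h
      · exact absurd ((ZMod.val_eq_zero _).mp h) (Units.ne_zero u)
      · exact h
    · have := ZMod.val_lt (u : ZMod p); omega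
  · intro u _ u' _ h
    exact Units.ext (ZMod.val_injective p h)
  · intro k hk
    rw [Finset.mem_Ioc] at hk
    have hco : Nat.Coprime k p := (Nat.Coprime.symm (hp.coprime_iff_not_dvd.mpr
      (fun hd => by have := Nat.le_of_dvd hk.1 hd; omega)))
    refine ⟨ZMod.unitOfCoprime k hco, Finset.mem_univ _, ?_⟩
    rw [ZMod.coe_unitOfCoprime, ZMod.val_natCast_of_lt (by omega)]
  · intro u _
    congr 1
    rw [ZMod.natCast_val, ZMod.cast_id]

lemma aeval_scale_coeff {R : Type*} [CommRing R] (c : R) (q : Polynomial R) (j : ℕ) :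
    (Polynomial.aeval (Polynomial.C c * Polynomial.X) q).coeff j = c ^ j * q.coeff j := by
  induction q using Polynomial.induction_on' with
  | add f g hf hg => simp [hf, hg, mul_add]
  | monomial n a =>
    rw [Polynomial.aeval_monomial, Polynomial.algebraMap_eq, mul_pow, ← Polynomial.C_pow,
      ← mul_assoc, ← _root_.map_mul, Polynomial.coeff_C_mul, Polynomial.coeff_X_pow, Polynomial.coeff_monomial]
    by_cases h : j = n
    · subst h; simp [mul_comm]
    · simp [h, Ne.symm h]

lemma prod_units_coeff_vanish (p t j : ℕ) [Fact p.Prime] (hj : 1 ≤ j) (ht : 1 ≤ t)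
    (hlt : t * j < p - 1) :
    (∏ u : (ZMod p)ˣ, (1 - Polynomial.C (((u : ZMod p)) ^ t)⁻¹ * Polynomial.X)).coeff j
      = 0 := by
  obtain ⟨g, hg⟩ := IsCyclic.exists_generator (α := (ZMod p)ˣ)
  set c : ZMod p := (((g : ZMod p)) ^ t)⁻¹ with hc
  set P : Polynomial (ZMod p) :=
    ∏ u : (ZMod p)ˣ, (1 - Polynomial.C (((u : ZMod p)) ^ t)⁻¹ * Polynomial.X) with hP
  have key : Polynomial.aeval (Polynomial.C c * Polynomial.X) P = P := by
    rw [hP, map_prod]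
    have h1 : ∀ u : (ZMod p)ˣ,
        Polynomial.aeval (Polynomial.C c * Polynomial.X)
          (1 - Polynomial.C (((u : ZMod p)) ^ t)⁻¹ * Polynomial.X)
        = 1 - Polynomial.C ((((g * u : (ZMod p)ˣ) : ZMod p)) ^ t)⁻¹ * Polynomial.X := by
      intro u
      simp only [map_sub, _root_.map_one, _root_.map_mul, Polynomial.aeval_C, Polynomial.aeval_X,
        Polynomial.algebraMap_eq]
      rw [← mul_assoc, ← _root_.map_mul, Units.val_mul, mul_pow, mul_inv]
      congr 2
      rw [hc, mul_comm]
    rw [Finset.prod_congr rfl (fun u _ => h1 u)]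
    exact Fintype.prod_equiv (Equiv.mulLeft g) _ _ (fun u => rfl)
  have hcj : c ^ j * P.coeff j = P.coeff j := by
    have := congrArg (fun q => Polynomial.coeff q j) key
    simpa [aeval_scale_coeff] using this
  have hcne : c ^ j ≠ 1 := by
    intro h1
    rw [hc, inv_pow, ← pow_mul, inv_eq_one] at h1
    have h3 : (g : (ZMod p)ˣ) ^ (t * j) = 1 := by
      apply Units.ext
      rw [Units.val_pow_eq_pow_val, Units.val_one]
      exact h1
    have h4 : orderOf g ∣ t * j := orderOf_dvd_of_pow_eq_one h3
    have h5 : orderOf g = p - 1 := by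
      rw [orderOf_eq_card_of_forall_mem_zpowers hg, Nat.card_eq_fintype_card, ZMod.card_units]
    rw [h5] at h4
    have := Nat.le_of_dvd (by positivity) h4
    omega
  have : (c ^ j - 1) * P.coeff j = 0 := by rw [sub_mul, one_mul, hcj, sub_self]
  rcases mul_eq_zero.mp this with h | h
  · exact absurd (by linear_combination h) hcne
  · exact h


def Qrep (p : ℕ) (q : ℚ) (z : ZMod p) : Prop :=
  ∃ a b : ℤ, ¬ (p : ℤ) ∣ b ∧ q * b = a ∧ (a : ZMod p) = z * b

lemma Qrep_one (p : ℕ) (hp : 2 ≤ p) : Qrep p 1 1 :=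
  ⟨1, 1, fun hd => by have := Int.le_of_dvd one_pos hd; omega, by norm_num, by norm_num⟩

lemma Qrep_zero (p : ℕ) (hp : 2 ≤ p) : Qrep p 0 0 :=
  ⟨0, 1, fun hd => by have := Int.le_of_dvd one_pos hd; omega, by norm_num, by norm_num⟩

lemma Qrep_add (p : ℕ) (hp : p.Prime) {q₁ q₂ : ℚ} {z₁ z₂ : ZMod p}
    (h₁ : Qrep p q₁ z₁) (h₂ : Qrep p q₂ z₂) : Qrep p (q₁ + q₂) (z₁ + z₂) := by
  obtain ⟨a₁, b₁, hb₁, hq₁, hc₁⟩ := h₁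
  obtain ⟨a₂, b₂, hb₂, hq₂, hc₂⟩ := h₂
  refine ⟨a₁ * b₂ + a₂ * b₁, b₁ * b₂, ?_, ?_, ?_⟩
  · intro hd
    rcases (Int.Prime.dvd_mul' hp hd) with h | h <;> tauto
  · push_cast
    calc (q₁ + q₂) * (b₁ * b₂) = (q₁ * b₁) * b₂ + (q₂ * b₂) * b₁ := by ring
    _ = (a₁ : ℚ) * b₂ + (a₂ : ℚ) * b₁ := by rw [hq₁, hq₂]
  · push_cast
    rw [hc₁, hc₂]; ring

lemma Qrep_mul (p : ℕ) (hp : p.Prime) {q₁ q₂ : ℚ} {z₁ z₂ : ZMod p}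
    (h₁ : Qrep p q₁ z₁) (h₂ : Qrep p q₂ z₂) : Qrep p (q₁ * q₂) (z₁ * z₂) := by
  obtain ⟨a₁, b₁, hb₁, hq₁, hc₁⟩ := h₁
  obtain ⟨a₂, b₂, hb₂, hq₂, hc₂⟩ := h₂
  refine ⟨a₁ * a₂, b₁ * b₂, ?_, ?_, ?_⟩
  · intro hd
    rcases (Int.Prime.dvd_mul' hp hd) with h | h <;> tauto
  · push_cast
    calc q₁ * q₂ * (b₁ * b₂) = (q₁ * b₁) * (q₂ * b₂) := by ring
    _ = (a₁ : ℚ) * a₂ := by rw [hq₁, hq₂]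
  · push_cast
    rw [hc₁, hc₂]; ring

lemma Qrep_sum (p : ℕ) (hp : p.Prime) {ι : Type*} (S : Finset ι) (f : ι → ℚ) (g : ι → ZMod p)
    (h : ∀ i ∈ S, Qrep p (f i) (g i)) :
    Qrep p (∑ i ∈ S, f i) (∑ i ∈ S, g i) := by
  classical
  induction S using Finset.induction_on with
  | empty => simpa using Qrep_zero p hp.two_le
  | insert _ _ hnot ih =>
    rename_i a S'
    rw [Finset.sum_insert hnot, Finset.sum_insert hnot]
    exact Qrep_add p hp (h a (by simp)) (ih fun i hi => h i (by simp [hi]))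

lemma Qrep_inv_pow (p k a : ℕ) [Fact p.Prime] (hk0 : 0 < k) (hkp : k < p) :
    Qrep p (1 / (k : ℚ) ^ a) (((k : ZMod p) ^ a)⁻¹) := by
  have hp : p.Prime := Fact.out
  have hkz : (k : ZMod p) ≠ 0 := by
    rw [Ne, ZMod.natCast_eq_zero_iff]
    exact fun hd => absurd (Nat.le_of_dvd hk0 hd) (by omega)
  refine ⟨1, (k : ℤ) ^ a, ?_, ?_, ?_⟩
  · intro hd
    have : (p : ℤ) ∣ (k : ℤ) := (Int.Prime.dvd_pow' hp hd)
    rw [Int.natCast_dvd_natCast] at this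
    exact absurd (Nat.le_of_dvd hk0 this) (by omega)
  · have h : ((k : ℚ)) ^ a ≠ 0 := pow_ne_zero _ (by exact_mod_cast hk0.ne')
    push_cast
    field_simp
  · push_cast
    rw [inv_mul_cancel₀ (pow_ne_zero _ hkz)]

lemma Qrep_num_dvd (p : ℕ) (hp : p.Prime) {q : ℚ} (h : Qrep p q 0) : (p : ℤ) ∣ q.num := by
  obtain ⟨a, b, hb, hq, hc⟩ := h
  have ha : (p : ℤ) ∣ a := by
    rw [zero_mul] at hc
    exact (ZMod.intCast_zmod_eq_zero_iff_dvd a p).mp hc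
  have h1 : (q.num : ℚ) * b = (a : ℚ) * (q.den : ℚ) := by
    have hd : (q.den : ℚ) ≠ 0 := by exact_mod_cast q.den_ne_zero
    rw [← Rat.num_div_den q] at hq
    field_simp at hq
    rw [mul_comm (a : ℚ)]; exact_mod_cast hq
  have h2 : q.num * b = a * (q.den : ℤ) := by exact_mod_cast h1
  have hdvd : (p : ℤ) ∣ q.num * b := h2 ▸ Dvd.dvd.mul_right ha _
  rcases (Int.Prime.dvd_mul' hp hdvd) with h | h
  · exact h
  · exact absurd h hb

lemma Qrep_Haux (p : ℕ) [Fact p.Prime] :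
    ∀ (w : List ℕ) (m : ℕ), Qrep p (Haux w m (p - 1)) (hz p w m) := by
  have hp : p.Prime := Fact.out
  intro w
  induction w with
  | nil => intro m; exact Qrep_one p hp.two_le
  | cons a t ih =>
    intro m
    rw [show Haux (a :: t) m (p - 1)
        = ∑ k ∈ Finset.Ioc m (p - 1), (1 / (k : ℚ) ^ a) * Haux t k (p - 1) from rfl, hz_cons]
    refine Qrep_sum p hp _ _ _ ?_
    intro k hk
    rw [Finset.mem_Ioc] at hk
    have hp2 : 2 ≤ p := hp.two_le
    exact Qrep_mul p hp (Qrep_inv_pow p k a (by omega) (by omega)) (ih k)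

/-- For odd positive r, s, any n ≥ 1 and prime p ≥ 2n(r+s),
H({r,s}^n; p−1) ≡ 0 (mod p). -/
theorem H_rs_repeated_cong_zero (r s n p : ℕ) (hr : 1 ≤ r) (hs : 1 ≤ s)
    (hrodd : Odd r) (hsodd : Odd s) (hn : 1 ≤ n) (hp : p.Prime)
    (hpw : 2 * n * (r + s) ≤ p) :
    (p : ℤ) ∣ (H ((List.replicate n [r, s]).flatten) (p - 1)).num := by
  haveI : Fact p.Prime := ⟨hp⟩
  have hw2 : 2 ≤ n * (r + s) := by nlinarith
  have hwp : 2 * (n * (r + s)) ≤ p := by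
    calc 2 * (n * (r + s)) = 2 * n * (r + s) := by ring
    _ ≤ p := hpw
  have h4 : 4 ≤ p := by omega
  have h2z : (2 : ZMod p) ≠ 0 := by
    intro h
    have hd : p ∣ 2 := by
      have : ((2 : ℕ) : ZMod p) = 0 := by exact_mod_cast h
      exact (ZMod.natCast_eq_zero_iff 2 p).mp this
    have := Nat.le_of_dvd two_pos hd
    omega
  set Q := Pdown p r s (p - 1) with hQ
  have hself := Pdown_selfadj p r s hrodd hsodd
  have h01 : Q 0 1 = 0 := by
    have h := hself
    rw [Matrix.adjugate_fin_two] at h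
    have h2 := congrFun (congrFun h 0) 1
    simp only [Matrix.cons_val_zero, Matrix.cons_val_one, Matrix.head_cons,
      Matrix.cons_val', Matrix.empty_val', Matrix.cons_val_fin_one, Matrix.head_fin_const,
      Matrix.of_apply] at h2
    rw [← hQ] at h2
    have h2c : (2 : Polynomial (ZMod p)) * Q 0 1 = 0 := by
      rw [two_mul]
      nth_rewrite 1 [← h2]
      ring
    rcases mul_eq_zero.mp h2c with hbad | hgood
    · exfalso
      have : ((2 : ZMod p)) = 0 := by
        have : (Polynomial.C (2 : ZMod p)) = 0 := by rw [map_ofNat]; exact_mod_cast hbad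
        exact_mod_cast (Polynomial.C_eq_zero).mp this
      exact h2z this
    · exact hgood
  have hmul := Matrix.mul_adjugate Q
  rw [hself] at hmul
  have hexp : Q 0 0 * Q 0 0 = Q.det := by
    have h00 : (Q * Q) 0 0 = (Q.det • (1 : Matrix (Fin 2) (Fin 2) (Polynomial (ZMod p)))) 0 0 := by
      rw [hmul]
    rw [mul_apply_two, h01, zero_mul, add_zero, Matrix.smul_apply, Matrix.one_apply_eq,
      smul_eq_mul, mul_one] at h00
    exact h00
  obtain ⟨h00e, -, -, -⟩ := Pdown_entries p r s (p - 1) le_rfl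
  rw [Nat.sub_self] at h00e
  have hdet := Pdown_det p r s (p - 1) le_rfl
  rw [Nat.sub_self] at hdet
  have hdc : ∀ j, 1 ≤ j → j ≤ n → (Q.det).coeff j = 0 := by
    intro j h1 h2
    rw [hQ, hdet,
      prod_Ioc_eq_prod_units p (fun z => 1 - Polynomial.C ((z ^ (r + s))⁻¹) * Polynomial.X)]
    refine prod_units_coeff_vanish p (r + s) j h1 (by omega) ?_
    have : (r + s) * j ≤ n * (r + s) := by
      calc (r + s) * j ≤ (r + s) * n := Nat.mul_le_mul_left _ h2
      _ = n * (r + s) := Nat.mul_comm _ _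
    omega
  have hc0 : (Q 0 0).coeff 0 = 1 := by rw [h00e 0]; rfl
  have hind : ∀ j, 1 ≤ j → j ≤ n → (Q 0 0).coeff j = 0 := by
    intro j
    induction j using Nat.strong_induction_on with
    | _ j ih =>
      intro h1 h2
      have hc := congrArg (fun q => Polynomial.coeff q j) hexp
      rw [Polynomial.coeff_mul, Finset.Nat.sum_antidiagonal_eq_sum_range_succ_mk,
        hdc j h1 h2] at hc
      obtain ⟨jj, rfl⟩ : ∃ jj, j = jj + 1 := ⟨j - 1, by omega⟩
      rw [Finset.sum_range_succ', Finset.sum_range_succ] at hc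
      have hmid : ∀ i ∈ Finset.range jj,
          (Q 0 0).coeff (i + 1) * (Q 0 0).coeff (jj + 1 - (i + 1)) = 0 := by
        intro i hi
        rw [Finset.mem_range] at hi
        rw [ih (i + 1) (by omega) (by omega) (by omega), zero_mul]
      rw [Finset.sum_eq_zero hmid, zero_add, Nat.sub_self, Nat.sub_zero, hc0, mul_one,
        one_mul] at hc
      have h2c : (2 : ZMod p) * (Q 0 0).coeff (jj + 1) = 0 := by rw [two_mul]; exact hc
      rcases mul_eq_zero.mp h2c with hbad | hgood
      · exact absurd hbad h2z
      · exact hgood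
  have hvan : hz p ((List.replicate n [r, s]).flatten) 0 = 0 := by
    have := hind n hn le_rfl
    rw [h00e n] at this
    exact this
  have hq := Qrep_Haux p ((List.replicate n [r, s]).flatten) 0
  rw [hvan] at hq
  exact Qrep_num_dvd p hp hq
end
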